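/- Let SL₃(ℤ) denote the group of 3×3 integer matrices of determinant 1, acting on ℤ³ by matrix–vector multiplication. Let v, w ∈ ℤ³ be primitive vectors, i.e. each has coordinates with greatest common divisor 1. If every element of SL₃(ℤ) fixing v also fixes w (the stabilizer of v is contained in the stabilizer of w), then w = v or w = −v. -/
import Mathlib


open Matrix

/-- Bezout for a primitive vector in `ℤ³`. -/
private lemma bezout_three (v : Fin 3 → ℤ) (hv : Finset.univ.gcd v = 1) :
    ∃ a b c : ℤ, a * v 0 + b * v 1 + c * v 2 = 1 := by
  have h1 : Int.gcd (v 0) ((Int.gcd (v 1) (v 2) : ℤ)) = 1 := by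
    have e : Finset.univ.gcd v = GCDMonoid.gcd (v 0) (GCDMonoid.gcd (v 1) (v 2)) := by
      simp [show (Finset.univ : Finset (Fin 3)) = {0,1,2} from rfl, Finset.gcd_insert,
        Finset.gcd_singleton, (associated_normalize (v 2)).symm.gcd_eq_right]
    rw [e, ← Int.coe_gcd, ← Int.coe_gcd] at hv
    exact_mod_cast hv
  have h2 := Int.gcd_eq_gcd_ab (v 0) ((Int.gcd (v 1) (v 2) : ℤ))
  have h3 := Int.gcd_eq_gcd_ab (v 1) (v 2)
  rw [h1] at h2
  exact ⟨Int.gcdA (v 0) ((Int.gcd (v 1) (v 2) : ℤ)),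
    Int.gcdB (v 0) ((Int.gcd (v 1) (v 2) : ℤ)) * Int.gcdA (v 1) (v 2),
    Int.gcdB (v 0) ((Int.gcd (v 1) (v 2) : ℤ)) * Int.gcdB (v 1) (v 2),
    by push_cast at h2; linear_combination -h2 - (Int.gcdB (v 0) ((Int.gcd (v 1) (v 2) : ℤ))) * h3⟩

/-- A primitive vector of `ℤ³` is determined up to sign by its stabilizer in `SL₃(ℤ)`:
if `v` and `w` are primitive (gcd of coordinates is `1`) and every element of `SL₃(ℤ)`
fixing `v` also fixes `w`, then `w = v` or `w = -v`. -/
theorem primitive_determined_up_to_sign_by_stabilizer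
    (v w : Fin 3 → ℤ) (hv : Finset.univ.gcd v = 1) (hw : Finset.univ.gcd w = 1)
    (h : ∀ g : Matrix.SpecialLinearGroup (Fin 3) ℤ,
        (g : Matrix (Fin 3) (Fin 3) ℤ) *ᵥ v = v →
        (g : Matrix (Fin 3) (Fin 3) ℤ) *ᵥ w = w) :
    w = v ∨ w = -v := by
  obtain ⟨i0, hi0⟩ : ∃ i, v i ≠ 0 := by
    by_contra hc
    push_neg at hc
    rw [show v = 0 from funext fun i => hc i] at hv
    rw [Finset.gcd_eq_zero_iff.mpr (by simp)] at hv
    exact absurd hv (by norm_num)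
  have hv0 : v ≠ 0 := fun hvz => hi0 (by rw [hvz]; rfl)
  -- Key step: any integer linear form vanishing on `v` vanishes on `w`,
  -- via the transvection `1 + v uᵀ` which lies in `SL₃(ℤ)` and fixes `v`.
  have key : ∀ u : Fin 3 → ℤ, u 0 * v 0 + u 1 * v 1 + u 2 * v 2 = 0 →
      u 0 * w 0 + u 1 * w 1 + u 2 * w 2 = 0 := by
    intro u huv
    set M : Matrix (Fin 3) (Fin 3) ℤ :=
      Matrix.of (fun i j => (if i = j then (1:ℤ) else 0) + v i * u j) with hM
    have hMmul : ∀ x : Fin 3 → ℤ,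
        M *ᵥ x = fun i => x i + v i * (u 0 * x 0 + u 1 * x 1 + u 2 * x 2) := by
      intro x
      funext i
      simp [hM, mulVec, dotProduct, Fin.sum_univ_three, ite_mul]
      rcases i with ⟨i, hi⟩
      interval_cases i <;> simp <;> ring
    have hdet : M.det = 1 := by
      simp [hM, det_fin_three]
      linear_combination huv
    have hMv : M *ᵥ v = v := by
      rw [hMmul]; funext i; simp [huv]
    have hwfix := h ⟨M, hdet⟩ hMv
    rw [hMmul] at hwfix
    obtain ⟨i, hi⟩ : ∃ i, v i ≠ 0 := by
      by_contra hc
      push_neg at hc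
      exact hv0 (funext fun i => hc i)
    have hkey : v i * (u 0 * w 0 + u 1 * w 1 + u 2 * w 2) = 0 := by
      have := congrFun hwfix i
      simpa using this
    rcases mul_eq_zero.mp hkey with h' | h'
    · exact absurd h' hi
    · exact h'
  -- the three cross-product relations
  have e1 : v 2 * w 1 - v 1 * w 2 = 0 := by
    have := key ![0, v 2, -(v 1)] (by simp; ring)
    simp at this
    linarith
  have e2 : v 2 * w 0 - v 0 * w 2 = 0 := by
    have := key ![v 2, 0, -(v 0)] (by simp; ring)
    simp at this
    linarith
  have e3 : v 1 * w 0 - v 0 * w 1 = 0 := by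
    have := key ![v 1, -(v 0), 0] (by simp; ring)
    simp at this
    linarith
  -- w = k • v
  obtain ⟨a, b, c, habc⟩ := bezout_three v hv
  set k : ℤ := a * w 0 + b * w 1 + c * w 2 with hk
  have hwk : ∀ i, w i = k * v i := by
    intro i
    fin_cases i
    · show w 0 = k * v 0
      linear_combination (-(w 0)) * habc + b * e3 + c * e2
    · show w 1 = k * v 1
      linear_combination (-(w 1)) * habc - a * e3 + c * e1
    · show w 2 = k * v 2
      linear_combination (-(w 2)) * habc - a * e2 - b * e1
  -- k is a unit
  have hkdvd : k ∣ Finset.univ.gcd w := by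
    refine Finset.dvd_gcd fun i _ => ?_
    exact ⟨v i, hwk i⟩
  rw [hw] at hkdvd
  rcases Int.isUnit_iff.mp (isUnit_of_dvd_one hkdvd) with hk1 | hk1
  · left
    funext i
    rw [hwk i, hk1, one_mul]
  · right
    funext i
    rw [hwk i, hk1]
    simp
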